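/- If A is an optimal assumption for L, then any strategy σ_∃ for which A is sufficient is strongly winning, and A = EA(σ_∃). -/
import Mathlib


open scoped Classical

universe u v

variable {I : Type u} {O : Type v}

/-- The finite (even) history consisting of the first `n` (input, output) pairs of a word.
A word in `(Σ_I · Σ_O)^ω` is modelled as `w : ℕ → I × O`, where round `n` consists of the
input letter `(w n).1` followed by the output letter `(w n).2`. -/
def wpref (w : ℕ → I × O) (n : ℕ) : List (I × O) := (List.range n).map w

/-- Outcomes of a controller strategy `σ : (Σ_I·Σ_O)^*·Σ_I → Σ_O`. -/
def OutC (σ : List (I × O) → I → O) : Set (ℕ → I × O) :=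
  {w | ∀ n, (w n).2 = σ (wpref w n) (w n).1}

/-- Outcomes of an environment strategy `τ : (Σ_I·Σ_O)^* → Σ_I`. -/
def OutE (τ : List (I × O) → I) : Set (ℕ → I × O) :=
  {w | ∀ n, (w n).1 = τ (wpref w n)}

/-- Input projection `π_I`. -/
def inputProj (w : ℕ → I × O) : ℕ → I := fun n => (w n).1

/-- `A` is an input assumption: closed under changing output letters. -/
def IsInputAssumption (A : Set (ℕ → I × O)) : Prop :=
  ∀ w w' : ℕ → I × O, inputProj w = inputProj w' → w ∈ A → w' ∈ A

/-- Cylinder `h·(Σ_I·Σ_O)^ω` of an even history `h`. -/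
def cylE (h : List (I × O)) : Set (ℕ → I × O) := {w | wpref w h.length = h}

/-- Cylinder of a general history: an even part plus possibly a pending input letter. -/
def cylH (h : List (I × O) × Option I) : Set (ℕ → I × O) :=
  {w | wpref w h.1.length = h.1 ∧ ∀ i, h.2 = some i → (w h.1.length).1 = i}

/-- A scenario is coherent: no history is a prefix of two words of `S`
that agree on the next input but disagree on the next output. -/
def Coherent (S : Set (ℕ → I × O)) : Prop :=
  ∀ w ∈ S, ∀ w' ∈ S, ∀ n, wpref w n = wpref w' n → (w n).1 = (w' n).1 → (w n).2 = (w' n).2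

/-- The strategy `[S → σ]`: follow a word of the scenario `S` extending the current
history if one exists, and otherwise play `σ`. -/
noncomputable def shiftStrat (S : Set (ℕ → I × O))
    (σ : List (I × O) → I → O) : List (I × O) → I → O := fun h i =>
  if hex : ∃ w, w ∈ S ∧ wpref w h.length = h ∧ (w h.length).1 = i
  then (hex.choose h.length).2
  else σ h i

/-- `EA(σ) = L ∪ ((Σ_I·Σ_O)^ω \ Out(σ))`. -/
def EA (L : Set (ℕ → I × O)) (σ : List (I × O) → I → O) : Set (ℕ → I × O) :=
  L ∪ (OutC σ)ᶜ

/-- The words doomed for `σ`: some even-length prefix extends to an outcome of `σ`,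
but no outcome of `σ` extending that prefix is in `L`. -/
def Doomed (L : Set (ℕ → I × O)) (σ : List (I × O) → I → O) : Set (ℕ → I × O) :=
  {w | ∃ k, (OutC σ ∩ cylE (wpref w k)).Nonempty ∧ OutC σ ∩ cylE (wpref w k) ∩ L = ∅}

/-- `EA⁻(σ) = EA(σ) \ Doomed(σ)`. -/
def EAminus (L : Set (ℕ → I × O)) (σ : List (I × O) → I → O) : Set (ℕ → I × O) :=
  EA L σ \ Doomed L σ

/-- `A` is sufficient for the specification `L` (for some controller strategy). -/
def Sufficient (L A : Set (ℕ → I × O)) : Prop :=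
  ∃ σ : List (I × O) → I → O, OutC σ ∩ A ⊆ L

/-- `A` is output-restrictive. -/
def OutputRestrictive (A : Set (ℕ → I × O)) : Prop :=
  ∃ (h : List (I × O)) (σ : List (I × O) → I → O),
    (A ∩ cylE h).Nonempty ∧ (OutC σ ∩ cylE h).Nonempty ∧ A ∩ OutC σ ∩ cylE h = ∅

/-- The even history of length `n` produced jointly by controller `σ` and environment `τ`. -/
def playH (σ : List (I × O) → I → O) (τ : List (I × O) → I) : ℕ → List (I × O)
  | 0 => []
  | n+1 =>
      let g := playH σ τ n
      g ++ [(τ g, σ g (τ g))]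

/-- The unique joint outcome `Out(σ, τ)`. -/
def play (σ : List (I × O) → I → O) (τ : List (I × O) → I) : ℕ → I × O := fun n =>
  let g := playH σ τ n
  (τ g, σ g (τ g))

/-- History construction when the controller follows `σ` against the fixed input word `u`. -/
def playIH (σ : List (I × O) → I → O) (u : ℕ → I) : ℕ → List (I × O)
  | 0 => []
  | n+1 =>
      let g := playIH σ u n
      g ++ [(u n, σ g (u n))]

/-- The unique outcome `Out(σ, u)` of `σ` against the input word `u`. -/
def playI (σ : List (I × O) → I → O) (u : ℕ → I) : ℕ → I × O := fun n =>
  (u n, σ (playIH σ u n) (u n))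

/-- Outcomes extending the history `h` and following `σ` afterwards, `Out_h(σ)`. -/
def OutFrom (σ : List (I × O) → I → O) (h : List (I × O) × Option I) :
    Set (ℕ → I × O) :=
  {w | wpref w h.1.length = h.1 ∧ (∀ i, h.2 = some i → (w h.1.length).1 = i) ∧
       ∀ n, h.1.length ≤ n → (w n).2 = σ (wpref w n) (w n).1}

/-- Even histories extending the finite history `b`, following `σ` and `τ`. -/
def extH (σ : List (I × O) → I → O) (τ : List (I × O) → I)
    (b : List (I × O)) : ℕ → List (I × O)
  | 0 => b
  | n+1 =>
      let g := extH σ τ b n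
      g ++ [(τ g, σ g (τ g))]

/-- The unique word extending `b` and following `σ` and `τ` afterwards. -/
def extPlay (σ : List (I × O) → I → O) (τ : List (I × O) → I)
    (b : List (I × O)) : ℕ → I × O := fun n =>
  if hn : n < b.length then b.get ⟨n, hn⟩
  else
    let g := extH σ τ b (n - b.length)
    (τ g, σ g (τ g))

/-- The even history obtained from the general history `h`, letting `σ` answer a
pending input letter if there is one. -/
def histBase (σ : List (I × O) → I → O) (h : List (I × O) × Option I) :
    List (I × O) :=
  match h.2 with
  | none => h.1
  | some i => h.1 ++ [(i, σ h.1 i)]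

/-- `Out_h(σ, τ)`: the unique word extending `h`, following `σ` and `τ` afterwards. -/
def playFrom (σ : List (I × O) → I → O) (τ : List (I × O) → I)
    (h : List (I × O) × Option I) : ℕ → I × O :=
  extPlay σ τ (histBase σ h)

/-- `σ` is strongly winning for `L`. -/
def StronglyWinning (L : Set (ℕ → I × O)) (σ : List (I × O) → I → O) : Prop :=
  ∀ h : List (I × O) × Option I,
    (∃ σ' : List (I × O) → I → O, (OutC σ' ∩ cylH h).Nonempty ∧ OutC σ' ∩ cylH h ⊆ L) →
    OutC σ ∩ cylH h ⊆ L

/-- `σ` is subgame winning for `L`. -/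
def SubgameWinning (L : Set (ℕ → I × O)) (σ : List (I × O) → I → O) : Prop :=
  ∀ h : List (I × O) × Option I,
    (∃ σ' : List (I × O) → I → O, OutFrom σ' h ⊆ L) → OutFrom σ h ⊆ L


theorem wpref_length' (w : ℕ → I × O) (n : ℕ) : (wpref w n).length = n := by simp [wpref]

theorem wpref_take' (w : ℕ → I × O) {m n : ℕ} (h : m ≤ n) :
    (wpref w n).take m = wpref w m := by
  simp [wpref, ← List.map_take, List.take_range, Nat.min_eq_left h]

theorem wpref_get' (w : ℕ → I × O) {m n : ℕ} (h : m < n) :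
    (wpref w n).get ⟨m, by simp [wpref_length', h]⟩ = w m := by
  simp [wpref]

theorem eq_of_wpref_eq' {w w' : ℕ → I × O} {k : ℕ} (h : wpref w k = wpref w' k)
    {m : ℕ} (hm : m < k) : w m = w' m :=
  List.map_inj_left.mp h m (List.mem_range.mpr hm)

theorem wpref_prefix' (w : ℕ → I × O) {m n : ℕ} (h : m ≤ n) : wpref w m <+: wpref w n := by
  rw [← wpref_take' w h]; exact List.take_prefix _ _

/-- if `A` is optimal for `L` and sufficient for `σ`, then `σ` is
strongly winning and `A = EA(σ)`. -/
theorem optimal_implies_stronglyWinning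
    (L A : Set (ℕ → I × O)) (σ : List (I × O) → I → O)
    (hsuff : Sufficient L A)
    (hopt : ∀ B : Set (ℕ → I × O), Sufficient L B → ¬ A ⊂ B)
    (hσ : OutC σ ∩ A ⊆ L) :
    StronglyWinning L σ ∧ A = EA L σ := by
  classical
  have hAsub : A ⊆ EA L σ := by
    intro w hw
    by_cases hwo : w ∈ OutC σ
    · exact Or.inl (hσ ⟨hwo, hw⟩)
    · exact Or.inr hwo
  have hEAsuff : Sufficient L (EA L σ) := by
    refine ⟨σ, fun w hw => ?_⟩
    rcases hw.2 with hL | hout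
    · exact hL
    · exact absurd hw.1 hout
  have hAeq : A = EA L σ := by
    by_contra hne
    exact hopt _ hEAsuff (ssubset_iff_subset_ne.mpr ⟨hAsub, hne⟩)
  refine ⟨?_, hAeq⟩
  rintro h ⟨σ', ⟨w', hw'⟩, hsub'⟩ w₀ ⟨hw₀out, hw₀cyl⟩
  by_contra hw₀L
  set m := h.1.length with hm
  set C : List (I × O) → I → Prop := fun g j =>
    h.1 <+: g ∧ ∀ i, h.2 = some i →
      ((g.length = m → j = i) ∧ ∀ hl : m < g.length, (g.get ⟨m, hl⟩).1 = i) with hC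
  set σ'' : List (I × O) → I → O := fun g j => if C g j then σ' g j else σ g j with hσ''
  have fwd : ∀ (w : ℕ → I × O) (n : ℕ), C (wpref w n) ((w n).1) → w ∈ cylH h := by
    rintro w n ⟨hpre, hpend⟩
    have hmn : m ≤ n := by
      have := hpre.length_le; rwa [wpref_length'] at this
    have hcy : wpref w m = h.1 := by
      have h1 : h.1 = (wpref w n).take h.1.length := List.prefix_iff_eq_take.mp hpre
      rw [← hm] at h1
      rw [← wpref_take' w hmn]
      exact h1.symm
    refine ⟨hcy, ?_⟩
    intro i hi
    obtain ⟨heq, hlt⟩ := hpend i hi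
    rcases eq_or_lt_of_le hmn with heq' | hlt'
    · have h2 := heq (by rw [wpref_length', ← heq'])
      rw [show n = m from heq'.symm] at h2
      exact h2
    · have hg : (wpref w n).get ⟨m, by rw [wpref_length']; exact hlt'⟩ = w m :=
        wpref_get' w hlt'
      have := hlt (by rw [wpref_length']; exact hlt')
      rwa [hg] at this
  have bwd : ∀ w : ℕ → I × O, w ∈ cylH h → ∀ n, m ≤ n → C (wpref w n) ((w n).1) := by
    rintro w ⟨hcy, hpend⟩ n hmn
    refine ⟨?_, ?_⟩
    · rw [← hcy]; exact wpref_prefix' w hmn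
    · intro i hi
      refine ⟨?_, ?_⟩
      · intro hlen
        have hnm : n = m := by rwa [wpref_length'] at hlen
        rw [hnm]; exact hpend i hi
      · intro hl
        have hl' : m < n := by rwa [wpref_length'] at hl
        have hg : (wpref w n).get ⟨m, hl⟩ = w m := wpref_get' w hl'
        rw [hg]; exact hpend i hi
  have claimA : ∀ w : ℕ → I × O, w ∈ OutC σ'' → w ∈ cylH h → w ∈ OutC σ' ∩ cylH h := by
    intro w hout hcyl
    refine ⟨fun n => ?_, hcyl⟩
    rcases lt_or_ge n m with hn | hn
    · have hpw : wpref w m = wpref w' m := by rw [hcyl.1, hw'.2.1]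
      have hwn : w n = w' n := eq_of_wpref_eq' hpw hn
      have hpn : wpref w n = wpref w' n := by
        rw [← wpref_take' w hn.le, ← wpref_take' w' hn.le, hpw]
      rw [hpn, hwn]
      exact hw'.1 n
    · have hc := bwd w hcyl n hn
      have hn' := hout n
      rw [hσ''] at hn'
      simp only at hn'
      rwa [if_pos hc] at hn'
  have claimB : ∀ w : ℕ → I × O, w ∈ OutC σ'' → w ∉ cylH h → w ∈ OutC σ := by
    intro w hout hcyl n
    have hnc : ¬ C (wpref w n) ((w n).1) := fun hc => hcyl (fwd w n hc)
    have hn' := hout n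
    rw [hσ''] at hn'
    simp only at hn'
    rwa [if_neg hnc] at hn'
  have hsuffB : Sufficient L (insert w₀ A) := by
    refine ⟨σ'', fun w hw => ?_⟩
    by_cases hcyl : w ∈ cylH h
    · exact hsub' (claimA w hw.1 hcyl)
    · have hwσ := claimB w hw.1 hcyl
      rcases hw.2 with rfl | hwA
      · exact absurd hw₀cyl hcyl
      · exact hσ ⟨hwσ, hwA⟩
  have hw₀A : w₀ ∉ A := by
    rw [hAeq]
    rintro (hL | hout')
    · exact hw₀L hL
    · exact hout' hw₀out
  exact hopt _ hsuffB (Set.ssubset_insert hw₀A)
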